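/- (Curvature formula) For the mixture of two multivariate normal densities evaluated along the ridgeline, the curvature function κ(α) = (φ_2''φ_1' - φ_1''φ_2')/(φ_1 φ_2) satisfies κ(α) = p(α)²(1 - α(1-α)p(α)), where p(α) = (μ_2 - μ_1)'Σ_1^{-1}S_α^{-1}Σ_2^{-1}S_α^{-1}Σ_2^{-1}S_α^{-1}Σ_1^{-1}(μ_2 - μ_1) and S_α = (1-α)Σ_1^{-1} + αΣ_2^{-1}. -/

import Mathlib

open Matrix

noncomputable def gauss (D : ℕ) (μ : Fin D → ℝ) (S : Matrix (Fin D) (Fin D) ℝ)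
    (x : Fin D → ℝ) : ℝ :=
  (Real.sqrt ((2 * Real.pi) ^ D * S.det))⁻¹ *
    Real.exp (-((x - μ) ⬝ᵥ (S⁻¹ *ᵥ (x - μ))) / 2)

noncomputable def ridge (D : ℕ) (μ₁ μ₂ : Fin D → ℝ)
    (S₁ S₂ : Matrix (Fin D) (Fin D) ℝ) (α : ℝ) : Fin D → ℝ :=
  ((1 - α) • S₁⁻¹ + α • S₂⁻¹)⁻¹ *ᵥ ((1 - α) • (S₁⁻¹ *ᵥ μ₁) + α • (S₂⁻¹ *ᵥ μ₂))

/-- Component density \`j\` evaluated along the ridgeline, as a function of \`α\`. -/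
noncomputable def φα (D : ℕ) (μ₁ μ₂ : Fin D → ℝ)
    (S₁ S₂ : Matrix (Fin D) (Fin D) ℝ) (ν : Fin D → ℝ) (T : Matrix (Fin D) (Fin D) ℝ)
    (α : ℝ) : ℝ :=
  gauss D ν T (ridge D μ₁ μ₂ S₁ S₂ α)

/-!
Put `S_α = (1 - α) Σ₁⁻¹ + α Σ₂⁻¹` and `δ = μ₂ - μ₁`. Since
`S_α x*(α) = (1 - α) Σ₁⁻¹ μ₁ + α Σ₂⁻¹ μ₂`, we get `x* - μ₁ = α S_α⁻¹ Σ₂⁻¹ δ` and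
`x* - μ₂ = -(1 - α) S_α⁻¹ Σ₁⁻¹ δ`. With the identity `Σ₁⁻¹ S_α⁻¹ Σ₂⁻¹ = Σ₂⁻¹ S_α⁻¹ Σ₁⁻¹` this
gives `Σ₁⁻¹ (x* - μ₁) = α w` and `Σ₂⁻¹ (x* - μ₂) = -(1 - α) w` for `w = Σ₂⁻¹ S_α⁻¹ Σ₁⁻¹ δ`, and
differentiating the defining equation gives `ẋ* = S_α⁻¹ w`. Hence `φ₁' = -α p φ₁` and
`φ₂' = (1 - α) p φ₂` with `p = wᵀ S_α⁻¹ w`; in `φ₂'' φ₁' - φ₁'' φ₂'` the terms containing `p'`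
cancel, leaving `p² (1 - α (1 - α) p) φ₁ φ₂`.
-/

open Filter Topology

section VectorCalculus

variable {ι κ : Type*} [Fintype ι] [Fintype κ] {f g : ℝ → ι → ℝ} {f' g' : ι → ℝ} {t : ℝ}

theorem HasDerivAt.dotProduct (hf : HasDerivAt f f' t) (hg : HasDerivAt g g' t) :
    HasDerivAt (fun s => f s ⬝ᵥ g s) (f' ⬝ᵥ g t + f t ⬝ᵥ g') t := by
  simp only [_root_.dotProduct]
  rw [← Finset.sum_add_distrib]
  exact HasDerivAt.fun_sum fun i _ => (hasDerivAt_pi.1 hf i).mul (hasDerivAt_pi.1 hg i)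

theorem HasDerivAt.const_mulVec (A : Matrix κ ι ℝ) (hf : HasDerivAt f f' t) :
    HasDerivAt (fun s => A *ᵥ f s) (A *ᵥ f') t :=
  (Matrix.mulVecLin A).toContinuousLinearMap.hasFDerivAt.comp_hasDerivAt t hf

end VectorCalculus

section AffineInverse

variable {n : Type*} [Fintype n] [DecidableEq n] (P Q : Matrix n n ℝ) {t : ℝ}

theorem eventually_isUnit_det_one_sub_smul_add_smul (h : IsUnit ((1 - t) • P + t • Q).det) :
    ∀ᶠ s in 𝓝 t, IsUnit ((1 - s) • P + s • Q).det := by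
  have hc : Continuous fun s : ℝ => ((1 - s) • P + s • Q).det := by fun_prop
  simpa only [isUnit_iff_ne_zero] using hc.continuousAt.eventually_ne (isUnit_iff_ne_zero.1 h)

theorem continuousAt_one_sub_smul_add_smul_inv (h : IsUnit ((1 - t) • P + t • Q).det) :
    ContinuousAt (fun s : ℝ => ((1 - s) • P + s • Q)⁻¹) t := by
  have hinv : ContinuousAt Inv.inv ((1 - t) • P + t • Q) :=
    continuousAt_matrix_inv _ (by
      rw [Ring.inverse_eq_inv']; exact continuousAt_inv₀ (isUnit_iff_ne_zero.1 h))
  exact hinv.comp (f := fun s : ℝ => (1 - s) • P + s • Q) (by fun_prop)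

theorem HasDerivAt.one_sub_smul_add_smul_inv_mulVec {y : ℝ → n → ℝ} {y' : n → ℝ}
    (hy : HasDerivAt y y' t) (h : IsUnit ((1 - t) • P + t • Q).det) :
    HasDerivAt (fun s => ((1 - s) • P + s • Q)⁻¹ *ᵥ y s)
      (((1 - t) • P + t • Q)⁻¹ *ᵥ (y' - (Q - P) *ᵥ (((1 - t) • P + t • Q)⁻¹ *ᵥ y t))) t := by
  set M : ℝ → Matrix n n ℝ := fun s => (1 - s) • P + s • Q
  set z := (M t)⁻¹ *ᵥ y t
  have hMz : M t *ᵥ z = y t := by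
    rw [Matrix.mulVec_mulVec, Matrix.mul_nonsing_inv _ h, Matrix.one_mulVec]
  have hslope : ∀ s, IsUnit (M s).det → s ≠ t →
      slope (fun s => (M s)⁻¹ *ᵥ y s) t s = (M s)⁻¹ *ᵥ (slope y t s - (Q - P) *ᵥ z) := by
    intro s hs hst
    have hM : M s = M t + (s - t) • (Q - P) := by simp only [M]; module
    have hz : z = (M s)⁻¹ *ᵥ (M s *ᵥ z) := by
      rw [Matrix.mulVec_mulVec, Matrix.nonsing_inv_mul _ hs, Matrix.one_mulVec]
    have hdiff : (M s)⁻¹ *ᵥ y s - z = (M s)⁻¹ *ᵥ (y s - y t - (s - t) • ((Q - P) *ᵥ z)) := by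
      conv_lhs => rw [hz]
      rw [← Matrix.mulVec_sub, hM, Matrix.add_mulVec, hMz, Matrix.smul_mulVec, sub_add_eq_sub_sub]
    rw [slope_def_module, slope_def_module]
    show (s - t)⁻¹ • ((M s)⁻¹ *ᵥ y s - z) = _
    rw [hdiff, ← Matrix.mulVec_smul, smul_sub, smul_smul, inv_mul_cancel₀ (sub_ne_zero.2 hst),
      one_smul]
  rw [hasDerivAt_iff_tendsto_slope] at hy ⊢
  have hlim : Tendsto (fun s => (M s)⁻¹ *ᵥ (slope y t s - (Q - P) *ᵥ z)) (𝓝[≠] t)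
      (𝓝 ((M t)⁻¹ *ᵥ (y' - (Q - P) *ᵥ z))) :=
    ((continuous_fst.matrix_mulVec continuous_snd).tendsto _).comp
      (((continuousAt_one_sub_smul_add_smul_inv P Q h).tendsto.mono_left
        nhdsWithin_le_nhds).prodMk_nhds (hy.sub_const _))
  refine hlim.congr' ?_
  filter_upwards [nhdsWithin_le_nhds (eventually_isUnit_det_one_sub_smul_add_smul P Q h),
    self_mem_nhdsWithin] with s hs hst
  exact (hslope s hs hst).symm

end AffineInverse

theorem Matrix.inv_mul_smul_add_smul_inv_mul_inv_comm {n R : Type*} [Fintype n]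
    [DecidableEq n] [CommRing R] {P Q : Matrix n n R} (hP : IsUnit P.det) (hQ : IsUnit Q.det)
    (a b : R) :
    P⁻¹ * (a • P⁻¹ + b • Q⁻¹)⁻¹ * Q⁻¹ = Q⁻¹ * (a • P⁻¹ + b • Q⁻¹)⁻¹ * P⁻¹ := by
  have h : Q * (a • P⁻¹ + b • Q⁻¹) * P = P * (a • P⁻¹ + b • Q⁻¹) * Q := by
    simp only [Matrix.mul_add, Matrix.add_mul, Matrix.mul_smul, Matrix.smul_mul,
      Matrix.mul_assoc, nonsing_inv_mul _ hP, nonsing_inv_mul _ hQ, mul_nonsing_inv _ hP,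
      mul_nonsing_inv _ hQ, Matrix.mul_one, Matrix.one_mul]
  simpa only [Matrix.mul_inv_rev, Matrix.mul_assoc] using congrArg Inv.inv h

theorem Matrix.PosDef.one_sub_smul_add_smul {n : Type*} [Fintype n] {P Q : Matrix n n ℝ}
    (hP : P.PosDef) (hQ : Q.PosDef) {t : ℝ} (ht : t ∈ Set.Icc (0 : ℝ) 1) :
    ((1 - t) • P + t • Q).PosDef := by
  rcases ht.2.lt_or_eq with ht1 | rfl
  · exact (hP.smul (sub_pos.2 ht1)).add_posSemidef (hQ.posSemidef.smul ht.1)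
  · simpa using hQ

section Gauss

variable {D : ℕ} {μ : Fin D → ℝ} {S : Matrix (Fin D) (Fin D) ℝ}

theorem gauss_pos (hS : 0 < S.det) (x : Fin D → ℝ) : 0 < gauss D μ S x :=
  mul_pos (inv_pos.2 (Real.sqrt_pos.2 (mul_pos (by positivity) hS))) (Real.exp_pos _)

theorem HasDerivAt.gauss (hS : S.IsSymm) {x : ℝ → Fin D → ℝ} {x' : Fin D → ℝ} {t : ℝ}
    (hx : HasDerivAt x x' t) :
    HasDerivAt (fun s => gauss D μ S (x s))
      (-((S⁻¹ *ᵥ (x t - μ)) ⬝ᵥ x') * gauss D μ S (x t)) t := by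
  have hxμ := hx.sub_const μ
  have hq := hxμ.dotProduct (hxμ.const_mulVec S⁻¹)
  have hsymm : (x t - μ) ⬝ᵥ (S⁻¹ *ᵥ x') = (S⁻¹ *ᵥ (x t - μ)) ⬝ᵥ x' := by
    rw [dotProduct_mulVec, ← mulVec_transpose, hS.inv.eq]
  refine ((hq.neg.div_const 2).exp.const_mul _).congr_deriv ?_
  rw [hsymm, dotProduct_comm x']
  simp only [_root_.gauss, Pi.neg_apply]
  ring

end Gauss

theorem curvature_eq_of_hasDerivAt {f g p : ℝ → ℝ} {α : ℝ}
    (hf : ∀ᶠ t in 𝓝 α, HasDerivAt f (-(t * p t) * f t) t)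
    (hg : ∀ᶠ t in 𝓝 α, HasDerivAt g ((1 - t) * p t * g t) t)
    (hp : DifferentiableAt ℝ p α) (hf0 : f α ≠ 0) (hg0 : g α ≠ 0) :
    (deriv (deriv g) α * deriv f α - deriv (deriv f) α * deriv g α) / (f α * g α) =
      p α ^ 2 * (1 - α * (1 - α) * p α) := by
  have hf1 : HasDerivAt (fun t => -(t * p t) * f t)
      (-(1 * p α + α * deriv p α) * f α + -(α * p α) * (-(α * p α) * f α)) α :=
    ((hasDerivAt_id α).mul hp.hasDerivAt).neg.mul hf.self_of_nhds
  have hg1 : HasDerivAt (fun t => (1 - t) * p t * g t)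
      ((-1 * p α + (1 - α) * deriv p α) * g α + (1 - α) * p α * ((1 - α) * p α * g α)) α :=
    (((hasDerivAt_id α).const_sub 1).mul hp.hasDerivAt).mul hg.self_of_nhds
  have hf' : deriv f =ᶠ[𝓝 α] fun t => -(t * p t) * f t := hf.mono fun t ht => ht.deriv
  have hg' : deriv g =ᶠ[𝓝 α] fun t => (1 - t) * p t * g t := hg.mono fun t ht => ht.deriv
  rw [hf'.deriv_eq, hg'.deriv_eq, hf1.deriv, hg1.deriv, hf.self_of_nhds.deriv,
    hg.self_of_nhds.deriv]
  field_simp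
  ring

section Ridge

variable {D : ℕ} {μ₁ μ₂ : Fin D → ℝ} {S₁ S₂ : Matrix (Fin D) (Fin D) ℝ} {t : ℝ}

noncomputable def ridgeScore (D : ℕ) (μ₁ μ₂ : Fin D → ℝ) (S₁ S₂ : Matrix (Fin D) (Fin D) ℝ)
    (t : ℝ) : Fin D → ℝ :=
  S₂⁻¹ *ᵥ (((1 - t) • S₁⁻¹ + t • S₂⁻¹)⁻¹ *ᵥ (S₁⁻¹ *ᵥ (μ₂ - μ₁)))

-- The paper's `p(α) = ẋ*(α)ᵀ v₁(α) / α`.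
noncomputable def ridgeP (D : ℕ) (μ₁ μ₂ : Fin D → ℝ) (S₁ S₂ : Matrix (Fin D) (Fin D) ℝ)
    (t : ℝ) : ℝ :=
  ridgeScore D μ₁ μ₂ S₁ S₂ t ⬝ᵥ (((1 - t) • S₁⁻¹ + t • S₂⁻¹)⁻¹ *ᵥ ridgeScore D μ₁ μ₂ S₁ S₂ t)

theorem ridge_sub_left (h : IsUnit ((1 - t) • S₁⁻¹ + t • S₂⁻¹).det) :
    ridge D μ₁ μ₂ S₁ S₂ t - μ₁ = t • (((1 - t) • S₁⁻¹ + t • S₂⁻¹)⁻¹ *ᵥ (S₂⁻¹ *ᵥ (μ₂ - μ₁))) := by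
  have hb : (1 - t) • (S₁⁻¹ *ᵥ μ₁) + t • (S₂⁻¹ *ᵥ μ₂) =
      ((1 - t) • S₁⁻¹ + t • S₂⁻¹) *ᵥ μ₁ + t • (S₂⁻¹ *ᵥ (μ₂ - μ₁)) := by
    simp only [add_mulVec, smul_mulVec, mulVec_sub]
    module
  rw [ridge, hb, mulVec_add, mulVec_mulVec, nonsing_inv_mul _ h, one_mulVec, mulVec_smul,
    add_sub_cancel_left]

theorem ridge_sub_right (h : IsUnit ((1 - t) • S₁⁻¹ + t • S₂⁻¹).det) :
    ridge D μ₁ μ₂ S₁ S₂ t - μ₂ =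
      -((1 - t) • (((1 - t) • S₁⁻¹ + t • S₂⁻¹)⁻¹ *ᵥ (S₁⁻¹ *ᵥ (μ₂ - μ₁)))) := by
  have hb : (1 - t) • (S₁⁻¹ *ᵥ μ₁) + t • (S₂⁻¹ *ᵥ μ₂) =
      ((1 - t) • S₁⁻¹ + t • S₂⁻¹) *ᵥ μ₂ + -((1 - t) • (S₁⁻¹ *ᵥ (μ₂ - μ₁))) := by
    simp only [add_mulVec, smul_mulVec, mulVec_sub]
    module
  rw [ridge, hb, mulVec_add, mulVec_mulVec, nonsing_inv_mul _ h, one_mulVec, mulVec_neg,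
    mulVec_smul, add_sub_cancel_left]

theorem inv_mulVec_ridge_sub_left (h₁ : IsUnit S₁.det) (h₂ : IsUnit S₂.det)
    (h : IsUnit ((1 - t) • S₁⁻¹ + t • S₂⁻¹).det) :
    S₁⁻¹ *ᵥ (ridge D μ₁ μ₂ S₁ S₂ t - μ₁) = t • ridgeScore D μ₁ μ₂ S₁ S₂ t := by
  simp only [ridge_sub_left h, ridgeScore, mulVec_smul, mulVec_mulVec, ← Matrix.mul_assoc,
    inv_mul_smul_add_smul_inv_mul_inv_comm h₁ h₂]

theorem inv_mulVec_ridge_sub_right (h : IsUnit ((1 - t) • S₁⁻¹ + t • S₂⁻¹).det) :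
    S₂⁻¹ *ᵥ (ridge D μ₁ μ₂ S₁ S₂ t - μ₂) = -((1 - t) • ridgeScore D μ₁ μ₂ S₁ S₂ t) := by
  rw [ridge_sub_right h, mulVec_neg, mulVec_smul, ridgeScore]

theorem hasDerivAt_ridge (h₁ : IsUnit S₁.det) (h₂ : IsUnit S₂.det)
    (h : IsUnit ((1 - t) • S₁⁻¹ + t • S₂⁻¹).det) :
    HasDerivAt (ridge D μ₁ μ₂ S₁ S₂)
      (((1 - t) • S₁⁻¹ + t • S₂⁻¹)⁻¹ *ᵥ ridgeScore D μ₁ μ₂ S₁ S₂ t) t := by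
  have hb : HasDerivAt (fun s : ℝ => (1 - s) • (S₁⁻¹ *ᵥ μ₁) + s • (S₂⁻¹ *ᵥ μ₂))
      (S₂⁻¹ *ᵥ μ₂ - S₁⁻¹ *ᵥ μ₁) t := by
    refine ((((hasDerivAt_id' t).const_sub 1).smul_const (S₁⁻¹ *ᵥ μ₁)).fun_add
      ((hasDerivAt_id' t).smul_const (S₂⁻¹ *ᵥ μ₂))).congr_deriv ?_
    module
  refine (hb.one_sub_smul_add_smul_inv_mulVec _ _ h).congr_deriv (congrArg _ ?_)
  calc S₂⁻¹ *ᵥ μ₂ - S₁⁻¹ *ᵥ μ₁ - (S₂⁻¹ - S₁⁻¹) *ᵥ ridge D μ₁ μ₂ S₁ S₂ t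
      = S₁⁻¹ *ᵥ (ridge D μ₁ μ₂ S₁ S₂ t - μ₁) - S₂⁻¹ *ᵥ (ridge D μ₁ μ₂ S₁ S₂ t - μ₂) := by
        simp only [sub_mulVec, mulVec_sub]
        abel
    _ = ridgeScore D μ₁ μ₂ S₁ S₂ t := by
        rw [inv_mulVec_ridge_sub_left h₁ h₂ h, inv_mulVec_ridge_sub_right h]
        module

theorem hasDerivAt_φα_left (hS₁ : S₁.IsSymm) (h₁ : IsUnit S₁.det) (h₂ : IsUnit S₂.det)
    (h : IsUnit ((1 - t) • S₁⁻¹ + t • S₂⁻¹).det) :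
    HasDerivAt (φα D μ₁ μ₂ S₁ S₂ μ₁ S₁)
      (-(t * ridgeP D μ₁ μ₂ S₁ S₂ t) * φα D μ₁ μ₂ S₁ S₂ μ₁ S₁ t) t := by
  refine ((hasDerivAt_ridge h₁ h₂ h).gauss hS₁).congr_deriv ?_
  rw [inv_mulVec_ridge_sub_left h₁ h₂ h, smul_dotProduct, smul_eq_mul, ridgeP, φα]

theorem hasDerivAt_φα_right (hS₂ : S₂.IsSymm) (h₁ : IsUnit S₁.det) (h₂ : IsUnit S₂.det)
    (h : IsUnit ((1 - t) • S₁⁻¹ + t • S₂⁻¹).det) :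
    HasDerivAt (φα D μ₁ μ₂ S₁ S₂ μ₂ S₂)
      ((1 - t) * ridgeP D μ₁ μ₂ S₁ S₂ t * φα D μ₁ μ₂ S₁ S₂ μ₂ S₂ t) t := by
  refine ((hasDerivAt_ridge h₁ h₂ h).gauss hS₂).congr_deriv ?_
  rw [inv_mulVec_ridge_sub_right h, neg_dotProduct, smul_dotProduct, smul_eq_mul, neg_neg,
    ridgeP, φα]

theorem differentiableAt_ridgeP (h : IsUnit ((1 - t) • S₁⁻¹ + t • S₂⁻¹).det) :
    DifferentiableAt ℝ (ridgeP D μ₁ μ₂ S₁ S₂) t := by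
  have hw : HasDerivAt (ridgeScore D μ₁ μ₂ S₁ S₂) _ t :=
    ((hasDerivAt_const t (S₁⁻¹ *ᵥ (μ₂ - μ₁))).one_sub_smul_add_smul_inv_mulVec _ _ h).const_mulVec
      S₂⁻¹
  exact (hw.dotProduct (hw.one_sub_smul_add_smul_inv_mulVec _ _ h)).differentiableAt

theorem ridgeP_eq (hS₁ : S₁.IsSymm) (hS₂ : S₂.IsSymm) :
    ridgeP D μ₁ μ₂ S₁ S₂ t =
      (μ₂ - μ₁) ⬝ᵥ ((S₁⁻¹ * ((1 - t) • S₁⁻¹ + t • S₂⁻¹)⁻¹ * S₂⁻¹ *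
        ((1 - t) • S₁⁻¹ + t • S₂⁻¹)⁻¹ * S₂⁻¹ * ((1 - t) • S₁⁻¹ + t • S₂⁻¹)⁻¹ * S₁⁻¹) *ᵥ
          (μ₂ - μ₁)) := by
  have hM : ((1 - t) • S₁⁻¹ + t • S₂⁻¹)⁻¹.IsSymm := ((hS₁.inv.smul _).add (hS₂.inv.smul _)).inv
  simp only [ridgeP, ridgeScore, mulVec_mulVec]
  rw [dotProduct_mulVec, ← mulVec_transpose, mulVec_mulVec, dotProduct_comm]
  simp only [transpose_mul, hS₁.inv.eq, hS₂.inv.eq, hM.eq, Matrix.mul_assoc]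

end Ridge

/-- Theorem 3 (curvature formula): `κ(α) = p(α)² (1 - α(1-α) p(α))`. -/
theorem curvature_formula
    (D : ℕ) (μ₁ μ₂ : Fin D → ℝ) (S₁ S₂ : Matrix (Fin D) (Fin D) ℝ)
    (hS₁ : S₁.PosDef) (hS₂ : S₂.PosDef)
    (α : ℝ) (hα : α ∈ Set.Icc (0 : ℝ) 1) :
    (deriv (deriv (φα D μ₁ μ₂ S₁ S₂ μ₂ S₂)) α * deriv (φα D μ₁ μ₂ S₁ S₂ μ₁ S₁) α -
          deriv (deriv (φα D μ₁ μ₂ S₁ S₂ μ₁ S₁)) α * deriv (φα D μ₁ μ₂ S₁ S₂ μ₂ S₂) α) /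
        (φα D μ₁ μ₂ S₁ S₂ μ₁ S₁ α * φα D μ₁ μ₂ S₁ S₂ μ₂ S₂ α) =
      ((μ₂ - μ₁) ⬝ᵥ ((S₁⁻¹ * ((1 - α) • S₁⁻¹ + α • S₂⁻¹)⁻¹ * S₂⁻¹ *
              ((1 - α) • S₁⁻¹ + α • S₂⁻¹)⁻¹ * S₂⁻¹ *
              ((1 - α) • S₁⁻¹ + α • S₂⁻¹)⁻¹ * S₁⁻¹) *ᵥ (μ₂ - μ₁))) ^ 2 *
        (1 - α * (1 - α) *
          ((μ₂ - μ₁) ⬝ᵥ ((S₁⁻¹ * ((1 - α) • S₁⁻¹ + α • S₂⁻¹)⁻¹ * S₂⁻¹ *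
              ((1 - α) • S₁⁻¹ + α • S₂⁻¹)⁻¹ * S₂⁻¹ *
              ((1 - α) • S₁⁻¹ + α • S₂⁻¹)⁻¹ * S₁⁻¹) *ᵥ (μ₂ - μ₁)))) := by
  have hsymm₁ : S₁.IsSymm := isHermitian_iff_isSymm.1 hS₁.isHermitian
  have hsymm₂ : S₂.IsSymm := isHermitian_iff_isSymm.1 hS₂.isHermitian
  have h₁ : IsUnit S₁.det := hS₁.det_pos.ne'.isUnit
  have h₂ : IsUnit S₂.det := hS₂.det_pos.ne'.isUnit
  have hα' : IsUnit ((1 - α) • S₁⁻¹ + α • S₂⁻¹).det :=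
    (hS₁.inv.one_sub_smul_add_smul hS₂.inv hα).det_pos.ne'.isUnit
  have hnear := eventually_isUnit_det_one_sub_smul_add_smul _ _ hα'
  rw [← ridgeP_eq hsymm₁ hsymm₂]
  exact curvature_eq_of_hasDerivAt
    (hnear.mono fun t ht => hasDerivAt_φα_left hsymm₁ h₁ h₂ ht)
    (hnear.mono fun t ht => hasDerivAt_φα_right hsymm₂ h₁ h₂ ht)
    (differentiableAt_ridgeP hα') (gauss_pos hS₁.det_pos _).ne' (gauss_pos hS₂.det_pos _).ne'
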